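/- arXiv:1306.2195 — 4 statements merged into one kernel-verified Lean document; each statement's English description precedes it below -/
import Mathlib

section
/- For every purely imaginary unit quaternion n (re n = 0, ‖n‖ = 1), every angle α ∈ ℝ, and every purely imaginary quaternion w, writing q = exp((α/2) • n), w⊥ = ⟪w, n⟫ • n and w∥ = w − w⊥, the product of the conjugate of the rotated vector with the original vector decomposes as star (q * w * star q) * w = ((Real.cos α * ‖w∥‖² + ‖w⊥‖²) : ℝ) + (Real.sin α * ‖w∥‖²) • n + (((1 - Real.cos α) : ℍ) - Real.sin α • n) * (w∥ * w⊥), i.e. it equals the rotor of angle α about n scaled by ‖w∥‖², plus ‖w⊥‖², plus a cross term proportional to w∥ * w⊥. -/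
/-!
Write `w = a + b • n` with `b = ⟪w, n⟫`, so that `a` is pure and orthogonal to `n`, hence
anticommutes with `n`. Then `a * star q = q * a` for `q = exp ((α / 2) • n)`, so the rotation
acts on `a` as left multiplication by `q * q = exp (α • n) = cos α + sin α • n` and fixes `n`.
The rotated vector is pure, so its conjugate is its negative, and expanding
`-((exp (α • n) * a + b • n) * (a + b • n))` with `a * a = -‖a‖²`, `n * n = -1` and
`a * n = -(n * a)` gives the formula.
-/

open Quaternion NormedSpace

namespace Quaternion

variable {n a : ℍ[ℝ]}

theorem exp_smul_eq_cos_add_sin_smul (hn_re : n.re = 0) (hn_norm : ‖n‖ = 1) (t : ℝ) :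
    exp (t • n) = (Real.cos t : ℍ[ℝ]) + Real.sin t • n := by
  have h_norm : ‖t • n‖ = |t| := by rw [norm_smul, hn_norm, mul_one, Real.norm_eq_abs]
  rw [exp_of_re_eq_zero _ (by simp [hn_re]), h_norm, Real.cos_abs, smul_smul]
  congr 2
  rcases eq_or_ne t 0 with rfl | ht
  · simp
  · rcases abs_cases t with ⟨h_abs, _⟩ | ⟨h_abs, _⟩ <;> rw [h_abs] <;> field_simp
    rw [Real.sin_neg, neg_neg]

theorem mul_self_of_re_eq_zero (ha : a.re = 0) : a * a = -((‖a‖ ^ 2 : ℝ) : ℍ[ℝ]) := by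
  rw [← sq, sq_eq_neg_normSq.2 ha, normSq_eq_norm_mul_self, sq]

theorem mul_eq_neg_mul_of_inner_eq_zero {b : ℍ[ℝ]} (ha : a.re = 0) (hb : b.re = 0)
    (h : inner ℝ a b = 0) : a * b = -(b * a) := by
  rw [inner_def] at h
  ext <;> simp [ha, hb] at h ⊢ <;> linarith

theorem exp_smul_mul_star_exp_smul (hn_re : n.re = 0) (t : ℝ) :
    exp (t • n) * star (exp (t • n)) = 1 := by
  rw [self_mul_star, normSq_exp]
  simp [hn_re]

theorem exp_smul_mul_mul_star_exp_smul_self (hn_re : n.re = 0) (t : ℝ) :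
    exp (t • n) * n * star (exp (t • n)) = n := by
  rw [((Commute.refl n).smul_left t).exp_left.eq, mul_assoc, exp_smul_mul_star_exp_smul hn_re,
    mul_one]

theorem exp_half_smul_mul_mul_star_exp_half_smul (hn_re : n.re = 0) (han : a * n = -(n * a))
    (t : ℝ) :
    exp ((t / 2) • n) * a * star (exp ((t / 2) • n)) = exp (t • n) * a := by
  -- `SemiconjBy.exp_right` is stated over `ℚ`
  let : NormedAlgebra ℚ ℍ[ℝ] := .restrictScalars ℚ ℝ ℍ[ℝ]
  have h_semiconj : SemiconjBy a (-((t / 2) • n)) ((t / 2) • n) := by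
    simp only [SemiconjBy, mul_neg, mul_smul_comm, han, smul_mul_assoc, smul_neg, neg_neg]
  rw [star_exp, star_smul, star_eq_neg.2 hn_re, smul_neg, mul_assoc, h_semiconj.exp_right.eq,
    ← mul_assoc, ← exp_add_of_commute (Commute.refl _), ← add_smul, add_halves]

theorem exp_half_smul_mul_add_smul_mul_star (hn_re : n.re = 0) (han : a * n = -(n * a))
    (t b : ℝ) :
    exp ((t / 2) • n) * (a + b • n) * star (exp ((t / 2) • n)) =
      exp (t • n) * a + b • n := by
  rw [mul_add, add_mul, exp_half_smul_mul_mul_star_exp_half_smul hn_re han, mul_smul_comm,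
    smul_mul_assoc, exp_smul_mul_mul_star_exp_smul_self hn_re]

theorem neg_mul_add_smul_mul_add_smul {r : ℝ} (hnn : n * n = -1) (haa : a * a = -(r : ℍ[ℝ]))
    (han : a * n = -(n * a)) (x y b : ℝ) :
    -((((x : ℍ[ℝ]) + y • n) * a + b • n) * (a + b • n)) =
      ((x * r + b ^ 2 : ℝ) : ℍ[ℝ]) + (y * r) • n
        + (((1 - x : ℝ) : ℍ[ℝ]) - y • n) * (a * (b • n)) := by
  have hnn' (z : ℍ[ℝ]) : n * (n * z) = -z := by rw [← mul_assoc, hnn, neg_one_mul]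
  have hcoe (s : ℝ) : (s : ℍ[ℝ]) = s • (1 : ℍ[ℝ]) := by
    rw [← mul_one (s : ℍ[ℝ]), coe_mul_eq_smul]
  simp only [add_mul, mul_add, sub_mul, mul_neg, neg_neg, smul_mul_assoc, mul_smul_comm, mul_assoc,
    one_mul, mul_one, hnn, haa, han, hnn', hcoe]
  match_scalars <;> ring

end Quaternion

theorem rotated_times_original_decomposition
    (n : ℍ[ℝ]) (hn_re : n.re = 0) (hn_norm : ‖n‖ = 1)
    (α : ℝ) (w : ℍ[ℝ]) (hw : w.re = 0) :
    star (NormedSpace.exp ((α / 2) • n) * w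
        * star (NormedSpace.exp ((α / 2) • n))) * w =
      ((Real.cos α * ‖w - (inner ℝ w n : ℝ) • n‖ ^ 2
          + ‖(inner ℝ w n : ℝ) • n‖ ^ 2 : ℝ) : ℍ[ℝ])
        + (Real.sin α * ‖w - (inner ℝ w n : ℝ) • n‖ ^ 2) • n
        + (((1 - Real.cos α : ℝ) : ℍ[ℝ]) - Real.sin α • n)
            * ((w - (inner ℝ w n : ℝ) • n) * ((inner ℝ w n : ℝ) • n)) := by
  set b := inner ℝ w n
  set a := w - b • n with ha_def
  have hw_split : w = a + b • n := (sub_add_cancel w _).symm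
  have ha_re : a.re = 0 := by simp [ha_def, hw, hn_re]
  have ha_perp : inner ℝ a n = 0 := by
    rw [inner_sub_left, real_inner_smul_left, real_inner_self_eq_norm_sq, hn_norm, one_pow, mul_one,
      sub_self]
  have han : a * n = -(n * a) := mul_eq_neg_mul_of_inner_eq_zero ha_re hn_re ha_perp
  have hnn : n * n = -1 := by rw [mul_self_of_re_eq_zero hn_re, hn_norm, one_pow, coe_one]
  have h_star_rot : star (exp ((α / 2) • n) * w * star (exp ((α / 2) • n))) =
      -(exp ((α / 2) • n) * w * star (exp ((α / 2) • n))) := by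
    rw [star_mul, star_mul, star_star, star_eq_neg.2 hw, neg_mul, mul_neg, mul_assoc]
  have h_norm_perp : ‖b • n‖ ^ 2 = b ^ 2 := by
    rw [norm_smul, hn_norm, mul_one, Real.norm_eq_abs, sq_abs]
  clear_value a b
  rw [h_star_rot, neg_mul, hw_split, exp_half_smul_mul_add_smul_mul_star hn_re han,
    exp_smul_eq_cos_add_sin_smul hn_re hn_norm, h_norm_perp,
    neg_mul_add_smul_mul_add_smul hnn (mul_self_of_re_eq_zero ha_re) han]
end

section
/- Let v : ℝ^m → ℍ be a measurable, square integrable vector field (re (v x) = 0 for all x and ∫ ‖v x‖² dx < ∞), n a purely imaginary unit quaternion, α ∈ ℝ, q = exp((α/2) • n), and let C = ∫ star (q * v x * star q) * v x dx be the geometric cross correlation of the rotated field with the original at the origin. Then the scalar part of C satisfies re C = Real.cos α * (∫ ‖v∥ x‖² dx) + ∫ ‖v⊥ x‖² dx, where v⊥ x = ⟪v x, n⟫ • n and v∥ x = v x − v⊥ x. -/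
/-! Write `q = cos (α/2) + sin (α/2) n`, so `star q = cos (α/2) - sin (α/2) n`. Expanding
`q w star q` only needs `n² = -1`, the anticommutator `n w + w n = -2⟪n, w⟫` (so `n w n` is the
reflection `w - 2⟪w, n⟫ n`) and `⟪n w - w n, w⟫ = 0`. Hence pointwise
`re (star (q w star q) w) = ⟪q w star q, w⟫ = cos α ‖w‖² + (1 - cos α) ⟪w, n⟫²`, which is
`cos α ‖w∥‖² + ‖w⊥‖²`. This identity may be integrated because `v ∈ L²`: the correlation
integrand is a product of two `L²` functions, and `‖v⊥‖²`, `‖v∥‖² = ‖v‖² - ‖v⊥‖²` are integrable. -/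

open Quaternion MeasureTheory

noncomputable instance : MeasurableSpace ℍ[ℝ] := borel _
instance : BorelSpace ℍ[ℝ] := ⟨rfl⟩

open scoped RealInnerProductSpace

section InnerProductSpace

variable {E : Type*} [NormedAddCommGroup E] [InnerProductSpace ℝ E] {n : E}

lemma norm_inner_smul_sq (h1 : ‖n‖ = 1) (w : E) : ‖⟪w, n⟫ • n‖ ^ 2 = ⟪w, n⟫ ^ 2 := by
  rw [norm_smul, h1, mul_one, Real.norm_eq_abs, sq_abs]

lemma norm_sub_inner_smul_sq (h1 : ‖n‖ = 1) (w : E) :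
    ‖w - ⟪w, n⟫ • n‖ ^ 2 = ‖w‖ ^ 2 - ‖⟪w, n⟫ • n‖ ^ 2 := by
  rw [norm_sub_sq_real, norm_inner_smul_sq h1, real_inner_smul_right]
  ring

end InnerProductSpace

namespace Quaternion

variable {a b n w : ℍ[ℝ]}

lemma re_star_mul (a b : ℍ[ℝ]) : (star a * b).re = ⟪a, b⟫ := by
  simp [inner_def, re_mul]

lemma inner_mul_sub_mul_self (a b : ℍ[ℝ]) : ⟪a * b - b * a, b⟫ = 0 := by
  simp [inner_def, re_mul]; ring

lemma mul_add_mul_swap_of_re_eq_zero (ha : a.re = 0) (hb : b.re = 0) :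
    a * b + b * a = ((-2 * ⟪a, b⟫ : ℝ) : ℍ[ℝ]) := by
  ext <;> simp [inner_def, re_mul, ha, hb] <;> ring

lemma mul_self_eq_neg_one_of_re_eq_zero (hn : n.re = 0) (h1 : ‖n‖ = 1) : n * n = -1 := by
  rw [← sq, sq_eq_neg_normSq.2 hn, normSq_eq_norm_mul_self, h1]; simp

lemma exp_smul_of_re_eq_zero (hn : n.re = 0) (h1 : ‖n‖ = 1) (t : ℝ) :
    NormedSpace.exp (t • n) = (Real.cos t : ℍ[ℝ]) + Real.sin t • n := by
  rcases eq_or_ne t 0 with rfl | ht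
  · simp
  rw [exp_of_re_eq_zero _ (by simp [hn]), norm_smul, h1, mul_one, Real.norm_eq_abs, Real.cos_abs,
    smul_smul]
  congr 2
  rcases abs_cases t with ⟨h, _⟩ | ⟨h, _⟩ <;> simp only [h, Real.sin_neg] <;> field_simp

lemma mul_mul_self_of_re_eq_zero (hn : n.re = 0) (h1 : ‖n‖ = 1) (hw : w.re = 0) :
    n * w * n = w - (2 * ⟪w, n⟫) • n := by
  calc n * w * n = (n * w + w * n) * n - w * (n * n) := by noncomm_ring
    _ = w - (2 * ⟪w, n⟫) • n := by
      rw [mul_add_mul_swap_of_re_eq_zero hn hw, mul_self_eq_neg_one_of_re_eq_zero hn h1,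
        coe_mul_eq_smul, real_inner_comm, mul_neg_one]
      module

lemma inner_mul_mul_star_self (hn : n.re = 0) (h1 : ‖n‖ = 1) (hw : w.re = 0) (c s : ℝ) :
    ⟪(c + s • n) * w * star (c + s • n), w⟫ =
      (c ^ 2 - s ^ 2) * ‖w‖ ^ 2 + 2 * s ^ 2 * ⟪w, n⟫ ^ 2 := by
  have hstar : star ((c : ℍ[ℝ]) + s • n) = c - s • n := by
    rw [star_add, star_coe, star_smul, star_eq_neg.2 hn, smul_neg, sub_eq_add_neg]
  have hexpand : ((c : ℍ[ℝ]) + s • n) * w * (c - s • n) =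
      (c ^ 2) • w + (c * s) • (n * w - w * n) + (-s ^ 2) • (n * w * n) := by
    simp only [add_mul, mul_sub, coe_mul_eq_smul, mul_coe_eq_smul, smul_mul_assoc, mul_smul_comm]
    module
  rw [hstar, hexpand]
  simp only [inner_add_left, inner_smul_left, inner_mul_sub_mul_self]
  rw [mul_mul_self_of_re_eq_zero hn h1 hw, inner_sub_left, inner_smul_left,
    real_inner_self_eq_norm_sq, real_inner_comm n w]
  simp only [conj_trivial]
  ring

lemma re_star_exp_conj_mul_self (hn : n.re = 0) (h1 : ‖n‖ = 1) (hw : w.re = 0) (α : ℝ) :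
    (star (NormedSpace.exp ((α / 2) • n) * w * star (NormedSpace.exp ((α / 2) • n))) * w).re =
      Real.cos α * ‖w - ⟪w, n⟫ • n‖ ^ 2 + ‖⟪w, n⟫ • n‖ ^ 2 := by
  have hcos : Real.cos α = Real.cos (α / 2) ^ 2 - Real.sin (α / 2) ^ 2 := by
    rw [← Real.cos_two_mul', mul_div_cancel₀ α two_ne_zero]
  rw [re_star_mul, exp_smul_of_re_eq_zero hn h1, inner_mul_mul_star_self hn h1 hw,
    norm_sub_inner_smul_sq h1, norm_inner_smul_sq h1, hcos]
  linear_combination ⟪w, n⟫ ^ 2 * Real.sin_sq_add_cos_sq (α / 2)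

lemma integral_re {X : Type*} [MeasurableSpace X] {μ : Measure X} {f : X → ℍ[ℝ]}
    (hf : Integrable f μ) : ∫ x, (f x).re ∂μ = (∫ x, f x ∂μ).re :=
  (LinearMap.toContinuousLinearMap (QuaternionAlgebra.reₗ (-1 : ℝ) 0 (-1)) :
    ℍ[ℝ] →L[ℝ] ℝ).integral_comp_comm hf

end Quaternion

theorem correlation_scalar_part
    {m : ℕ} (v : EuclideanSpace ℝ (Fin m) → ℍ[ℝ])
    (hmeas : Measurable v)
    (hre : ∀ x, (v x).re = 0)
    (hsq : Integrable (fun x => ‖v x‖ ^ 2))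
    (n : ℍ[ℝ]) (hn_re : n.re = 0) (hn_norm : ‖n‖ = 1)
    (α : ℝ) :
    (∫ x, star (NormedSpace.exp ((α / 2) • n) * v x
          * star (NormedSpace.exp ((α / 2) • n))) * v x).re =
      Real.cos α * (∫ x, ‖v x - (inner ℝ (v x) n : ℝ) • n‖ ^ 2)
        + ∫ x, ‖(inner ℝ (v x) n : ℝ) • n‖ ^ 2 := by
  set q := NormedSpace.exp ((α / 2) • n)
  have hv : MemLp v 2 := (memLp_two_iff_integrable_sq_norm hmeas.aestronglyMeasurable).2 hsq
  have hcorr : Integrable (fun x => star (q * v x * star q) * v x) :=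
    ((hv.continuousLinearMap_comp (.mulLeftRight ℝ ℍ[ℝ] q (star q))).star).integrable_mul hv
  have hperp : Integrable (fun x => ‖(inner ℝ (v x) n : ℝ) • n‖ ^ 2) :=
    (hv.continuousLinearMap_comp ((innerSLFlip ℝ n).smulRight n)).integrable_norm_pow two_ne_zero
  have hpar : Integrable (fun x => ‖v x - (inner ℝ (v x) n : ℝ) • n‖ ^ 2) :=
    (hsq.sub hperp).congr (ae_of_all _ fun x => (norm_sub_inner_smul_sq hn_norm (v x)).symm)
  rw [← integral_re hcorr, integral_congr_ae (ae_of_all _ fun x =>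
    re_star_exp_conj_mul_self hn_re hn_norm (hre x) α), integral_add (hpar.const_mul _) hperp,
    integral_const_mul]
end

section
/- Let v : ℝ^m → ℍ be a measurable, square integrable vector field (re (v x) = 0 for all x) with ∫ ‖v x‖² dx > 0, n a purely imaginary unit quaternion, α ∈ [0, π), q = exp((α/2) • n), and C = ∫ star (q * v x * star q) * v x dx. Then C ≠ 0; i.e., for rotation angles strictly less than π the geometric cross correlation of a nonzero field with its outer-rotated copy never vanishes at the origin. -/
/-!
Pairing with the rotor detects the correlation: for all quaternions `q, w` one has
`⟪q, star (q * w * star q) * w⟫ = ‖q‖² * q.re * ‖w‖²`. Integrating, the real inner product of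
the correlation with `q = exp ((α / 2) • n)` is `cos (α / 2) * ∫ ‖v‖²`, which is positive
for `0 ≤ α < π`.
-/

open Quaternion MeasureTheory

namespace Quaternion

open scoped RealInnerProductSpace

lemma inner_star_conj_mul_self (q w : ℍ[ℝ]) :
    ⟪q, star (q * w * star q) * w⟫ = normSq q * q.re * normSq w := by
  simp only [inner_def, normSq_def', re_mul, imI_mul, imJ_mul, imK_mul, re_star, imI_star,
    imJ_star, imK_star]
  ring

lemma norm_star_conj_mul_self (q w : ℍ[ℝ]) :
    ‖star (q * w * star q) * w‖ = ‖q‖ ^ 2 * ‖w‖ ^ 2 := by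
  simp only [norm_mul, norm_star]
  ring

lemma re_exp_smul_of_re_eq_zero {n : ℍ[ℝ]} (hn_re : n.re = 0) (hn_norm : ‖n‖ = 1) (θ : ℝ) :
    (NormedSpace.exp (θ • n)).re = Real.cos θ := by
  simp [re_exp, hn_re, norm_smul, hn_norm]

theorem integral_star_conj_mul_self_ne_zero {X : Type*} [MeasurableSpace X] {μ : Measure X}
    {q : ℍ[ℝ]} (hq : 0 < q.re) {v : X → ℍ[ℝ]} (hv : AEStronglyMeasurable v μ)
    (hsq : Integrable (fun x => ‖v x‖ ^ 2) μ) (hpos : 0 < ∫ x, ‖v x‖ ^ 2 ∂μ) :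
    ∫ x, star (q * v x * star q) * v x ∂μ ≠ 0 := by
  have hmeas : AEStronglyMeasurable (fun x => star (q * v x * star q) * v x) μ :=
    (((continuous_const.mul continuous_id).mul continuous_const).star.mul
      continuous_id).comp_aestronglyMeasurable hv
  have hint : Integrable (fun x => star (q * v x * star q) * v x) μ :=
    (hsq.const_mul (‖q‖ ^ 2)).mono' hmeas
      (.of_forall fun x => (norm_star_conj_mul_self q (v x)).le)
  have hq_norm : 0 < ‖q‖ := norm_pos_iff.2 fun h => by simp [h] at hq
  intro h
  have hpair := integral_inner (𝕜 := ℝ) hint q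
  simp only [h, inner_zero_right, inner_star_conj_mul_self, normSq_eq_norm_mul_self,
    ← sq] at hpair
  rw [integral_const_mul] at hpair
  exact (mul_pos (mul_pos (pow_pos hq_norm 2) hq) hpos).ne' hpair

end Quaternion

theorem correlation_ne_zero_general
    {m : ℕ} (v : EuclideanSpace ℝ (Fin m) → ℍ[ℝ])
    (hmeas : Measurable v)
    (hsq : Integrable (fun x => ‖v x‖ ^ 2))
    (hpos : 0 < ∫ x, ‖v x‖ ^ 2)
    (n : ℍ[ℝ]) (hn_re : n.re = 0) (hn_norm : ‖n‖ = 1)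
    (α : ℝ) (hα0 : 0 ≤ α) (hαπ : α < Real.pi) :
    (∫ x, star (NormedSpace.exp ((α / 2) • n) * v x
        * star (NormedSpace.exp ((α / 2) • n))) * v x) ≠ 0 := by
  refine integral_star_conj_mul_self_ne_zero ?_ hmeas.aestronglyMeasurable hsq hpos
  rw [re_exp_smul_of_re_eq_zero hn_re hn_norm]
  exact Real.cos_pos_of_mem_Ioo ⟨by linarith [Real.pi_pos], by linarith⟩

theorem correlation_ne_zero
    {m : ℕ} (v : EuclideanSpace ℝ (Fin m) → ℍ[ℝ])
    (hmeas : Measurable v)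
    (hre : ∀ x, (v x).re = 0)
    (hsq : Integrable (fun x => ‖v x‖ ^ 2))
    (hpos : 0 < ∫ x, ‖v x‖ ^ 2)
    (n : ℍ[ℝ]) (hn_re : n.re = 0) (hn_norm : ‖n‖ = 1)
    (α : ℝ) (hα0 : 0 ≤ α) (hαπ : α < Real.pi) :
    (∫ x, star (NormedSpace.exp ((α / 2) • n) * v x
        * star (NormedSpace.exp ((α / 2) • n))) * v x) ≠ 0 :=
  correlation_ne_zero_general v hmeas hsq hpos n hn_re hn_norm α hα0 hαπ
end

section
/- (Example, field (10) of the paper.) Define v : ℝ³ → ℍ by v x = i if x ∈ (−1,1)³ and x₁ ≥ 0, v x = j if x ∈ (−1,1)³ and x₁ < 0, and v x = 0 otherwise, where i, j, k are the imaginary quaternion units. Take the outer rotation by angle π/2 about the axis j, i.e. q = exp((π/4) • j), and let C = ∫ star (q * v x * star q) * v x dx be the geometric cross correlation at the origin. Then re C = 4 and ‖im C‖ = 4, so the detected rotation angle is Real.arccos (re C / ‖C‖) = π/4 — only half the true rotation angle π/2. -/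
/-!
The rotor is `q = exp ((π/4) • j) = (1 + j)/√2`. On the half `x₁ ≥ 0` of the cube the field is `i`,
which `q` turns into `q i q⋆ = -k`, and `(-k)⋆ i = j`: this half sees the full rotation by `π/2` and
contributes the pure bivector `4j`. On the half `x₁ < 0` the field is `j`, fixed by the rotation, and
`j⋆ j = 1`: this half contributes the pure scalar `4`. So `C = 4 + 4j`, whose scalar and bivector
parts have equal size, and the angle read off `C` is `π/4`.
-/

open Quaternion MeasureTheory

/-- The imaginary quaternion unit `i` (corresponding to `e₁`). -/
def iQ : ℍ[ℝ] := ⟨0, 1, 0, 0⟩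

/-- The imaginary quaternion unit `j` (corresponding to `e₂`). -/
def jQ : ℍ[ℝ] := ⟨0, 0, 1, 0⟩

/-- The vector field (10) of the paper: `e₁` on the half `x₁ ≥ 0` of the open
cube `(-1,1)³`, `e₂` on the half `x₁ < 0`, and `0` outside the cube. -/
noncomputable def vField10 (x : EuclideanSpace ℝ (Fin 3)) : ℍ[ℝ] :=
  open Classical in
  if (∀ i, x i ∈ Set.Ioo (-1 : ℝ) 1) then (if 0 ≤ x 0 then iQ else jQ) else 0

/-- The rotor of the outer rotation by `π/2` about the axis `j`. -/
noncomputable def rotor10 : ℍ[ℝ] := NormedSpace.exp ((Real.pi / 4) • jQ)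

/-- The geometric cross correlation at the origin of the rotated copy of the
field (10) with the original field. -/
noncomputable def corr10 : ℍ[ℝ] :=
  ∫ x, star (rotor10 * vField10 x * star rotor10) * vField10 x

open Set Function

section CoordBox

variable {ι : Type*}

def coordBox (s : ι → Set ℝ) : Set (EuclideanSpace ℝ ι) := {x | ∀ i, x i ∈ s i}

@[simp]
theorem mem_coordBox {s : ι → Set ℝ} {x : EuclideanSpace ℝ ι} :
    x ∈ coordBox s ↔ ∀ i, x i ∈ s i :=
  Iff.rfl

theorem coordBox_eq_preimage (s : ι → Set ℝ) :
    coordBox s = (MeasurableEquiv.toLp 2 (ι → ℝ)).symm ⁻¹' univ.pi s := by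
  ext x; simp [coordBox]

theorem measurableSet_coordBox [Countable ι] {s : ι → Set ℝ} (hs : ∀ i, MeasurableSet (s i)) :
    MeasurableSet (coordBox s) := by
  rw [coordBox_eq_preimage]
  exact (MeasurableSet.univ_pi hs).preimage (MeasurableEquiv.measurable _)

theorem volume_coordBox [Fintype ι] (s : ι → Set ℝ) :
    volume (coordBox s) = ∏ i, volume (s i) := by
  rw [coordBox_eq_preimage,
    (EuclideanSpace.volume_preserving_symm_measurableEquiv_toLp ι).measure_preimage_equiv,
    volume_pi_pi]

theorem coordBox_update_inter [DecidableEq ι] (s : ι → Set ℝ) (i₀ : ι) (t : Set ℝ) :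
    coordBox (update s i₀ (s i₀ ∩ t)) = coordBox s ∩ {x | x i₀ ∈ t} := by
  ext x
  simp only [coordBox, mem_inter_iff, mem_ofPred_eq]
  rw [forall_update_iff s fun i u => x i ∈ u, ← and_forall_ne i₀ (p := fun i => x i ∈ s i),
    mem_inter_iff]
  tauto

end CoordBox

def cubeSlab (t : Set ℝ) : Set (EuclideanSpace ℝ (Fin 3)) :=
  coordBox (fun _ => Ioo (-1) 1) ∩ {x | x 0 ∈ t}

theorem volume_cubeSlab (t : Set ℝ) :
    volume (cubeSlab t) = volume (Ioo (-1) 1 ∩ t) * 4 := by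
  rw [cubeSlab, ← coordBox_update_inter, volume_coordBox, Fin.prod_univ_three, update_self,
    update_of_ne (by decide), update_of_ne (by decide), Real.volume_Ioo, mul_assoc,
    ← ENNReal.ofReal_mul (by norm_num)]
  norm_num

theorem measurableSet_cubeSlab {t : Set ℝ} (ht : MeasurableSet t) :
    MeasurableSet (cubeSlab t) := by
  rw [cubeSlab, ← coordBox_update_inter]
  exact measurableSet_coordBox <| (forall_update_iff _ fun _ u => MeasurableSet u).2
    ⟨measurableSet_Ioo.inter ht, fun _ _ => measurableSet_Ioo⟩

theorem comp_vField10_eq_add_indicator {E : Type*} [AddZeroClass E] (f : ℍ[ℝ] → E) (hf : f 0 = 0)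
    (x : EuclideanSpace ℝ (Fin 3)) :
    f (vField10 x) = (cubeSlab (Ici 0)).indicator (fun _ => f iQ) x
      + (cubeSlab (Iio 0)).indicator (fun _ => f jQ) x := by
  classical
  rw [vField10, cubeSlab, cubeSlab]
  simp only [indicator_apply, mem_inter_iff, mem_coordBox, mem_ofPred_eq, mem_Ici, mem_Iio]
  by_cases hc : ∀ i, x i ∈ Ioo (-1 : ℝ) 1
  · rcases le_or_gt 0 (x 0) with h0 | h0
    · simp [hc, h0, h0.not_gt]
    · simp [hc, h0, h0.not_ge]
  · simp only [hc, false_and, if_false, hf, add_zero]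

theorem integral_comp_vField10 {E : Type*} [NormedAddCommGroup E] [NormedSpace ℝ E]
    [CompleteSpace E] (f : ℍ[ℝ] → E) (hf : f 0 = 0) :
    ∫ x, f (vField10 x) = (4 : ℝ) • f iQ + (4 : ℝ) • f jQ := by
  have hright : volume (cubeSlab (Ici 0)) = 4 := by
    rw [volume_cubeSlab, show Ioo (-1 : ℝ) 1 ∩ Ici 0 = Ico 0 1 by ext; simp; grind,
      Real.volume_Ico]
    norm_num
  have hleft : volume (cubeSlab (Iio 0)) = 4 := by
    rw [volume_cubeSlab, Ioo_inter_Iio, Real.volume_Ioo]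
    norm_num
  have hint : ∀ (t : Set ℝ) (e : E), MeasurableSet t → volume (cubeSlab t) = 4 →
      Integrable ((cubeSlab t).indicator fun _ => e) := fun t e ht hvol =>
    (integrable_indicator_iff (measurableSet_cubeSlab ht)).2 (integrableOn_const (by simp [hvol]))
  simp_rw [comp_vField10_eq_add_indicator f hf]
  rw [integral_add (hint _ _ measurableSet_Ici hright) (hint _ _ measurableSet_Iio hleft),
    integral_indicator_const _ (measurableSet_cubeSlab measurableSet_Ici),
    integral_indicator_const _ (measurableSet_cubeSlab measurableSet_Iio),
    measureReal_def, measureReal_def, hright, hleft]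
  norm_num

namespace Quaternion

theorem exp_smul_of_re_eq_zero_of_norm_eq_one {u : ℍ[ℝ]} (hre : u.re = 0) (hnorm : ‖u‖ = 1)
    (θ : ℝ) : NormedSpace.exp (θ • u) = ↑(Real.cos θ) + Real.sin θ • u := by
  rw [exp_of_re_eq_zero _ (by simp [hre]), norm_smul, hnorm, mul_one, Real.norm_eq_abs,
    Real.cos_abs, smul_smul]
  congr 2
  rcases abs_cases θ with ⟨h, -⟩ | ⟨h, -⟩ <;> rw [h]
  · exact div_mul_cancel_of_imp fun hθ => by simp [hθ]
  · rw [Real.sin_neg, neg_div_neg_eq]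
    exact div_mul_cancel_of_imp fun hθ => by simp [hθ]

theorem sq_norm_eq_sq_re_add_sq_norm_im (q : ℍ[ℝ]) : ‖q‖ ^ 2 = q.re ^ 2 + ‖q.im‖ ^ 2 := by
  simp only [sq, ← normSq_eq_norm_mul_self, normSq_def', re_im, imI_im, imJ_im, imK_im]
  ring

theorem arccos_re_div_norm_of_norm_im_eq_re {q : ℍ[ℝ]} (h : ‖q.im‖ = q.re) (hre : 0 < q.re) :
    Real.arccos (q.re / ‖q‖) = Real.pi / 4 := by
  have hnorm : ‖q‖ = √2 * q.re := by
    rw [← Real.sqrt_sq (norm_nonneg q), sq_norm_eq_sq_re_add_sq_norm_im, h, ← two_mul,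
      Real.sqrt_mul zero_le_two, Real.sqrt_sq hre.le]
  have hcos : q.re / ‖q‖ = Real.cos (Real.pi / 4) := by
    rw [hnorm, Real.cos_pi_div_four]
    field_simp
    norm_num
  rw [hcos, Real.arccos_cos (by positivity) (by linarith [Real.pi_pos])]

end Quaternion

open Quaternion

theorem norm_jQ : ‖jQ‖ = 1 := by
  rw [norm_eq_sqrt_real_inner, inner_self, normSq_def']
  simp [jQ]

theorem rotor10_eq : rotor10 = ⟨√2 / 2, 0, √2 / 2, 0⟩ := by
  rw [rotor10, exp_smul_of_re_eq_zero_of_norm_eq_one rfl norm_jQ, Real.cos_pi_div_four,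
    Real.sin_pi_div_four]
  ext <;> simp [-coe_div] <;> simp [jQ]

theorem star_conj_rotor10_iQ_mul_iQ : star (rotor10 * iQ * star rotor10) * iQ = jQ := by
  have hc : √2 / 2 * (√2 / 2) = 1 / 2 := by ring_nf; norm_num
  ext <;> simp [re_mul, imI_mul, imJ_mul, imK_mul] <;> norm_num [rotor10_eq, iQ, jQ, hc]

theorem star_conj_rotor10_jQ_mul_jQ : star (rotor10 * jQ * star rotor10) * jQ = 1 := by
  have hc : √2 / 2 * (√2 / 2) = 1 / 2 := by ring_nf; norm_num
  ext <;> simp [re_mul, imI_mul, imJ_mul, imK_mul] <;> norm_num [rotor10_eq, jQ, hc]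

theorem corr10_eq : corr10 = (4 : ℝ) • jQ + (4 : ℝ) • 1 := by
  rw [corr10, integral_comp_vField10 (fun w => star (rotor10 * w * star rotor10) * w) (by simp),
    star_conj_rotor10_iQ_mul_iQ, star_conj_rotor10_jQ_mul_jQ]

/-- Example, field (10): the geometric correlation with the copy rotated by
`π/2` about the axis `j` has scalar part `4` and bivector part of norm `4`,
hence detects only half the rotation angle, namely `π/4`. -/
theorem example_field10_detects_half_angle :
    corr10.re = 4 ∧ ‖corr10.im‖ = 4 ∧
      Real.arccos (corr10.re / ‖corr10‖) = Real.pi / 4 := by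
  have hjQ : jQ.re = 0 := rfl
  have hre : corr10.re = 4 := by simp [corr10_eq, hjQ]
  have him : corr10.im = (4 : ℝ) • jQ := by ext <;> simp [corr10_eq, hjQ]
  have hnorm_im : ‖corr10.im‖ = 4 := by norm_num [him, norm_smul, norm_jQ]
  exact ⟨hre, hnorm_im,
    arccos_re_div_norm_of_norm_im_eq_re (hnorm_im.trans hre.symm) (by norm_num [hre])⟩
end
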